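/- arXiv:2501.00070 — 3 statements merged into one kernel-verified Lean document; each statement's English description precedes it below -/
import Mathlib

section
/- Let H ∈ ℝ^{n×d} have singular value decomposition H = UΣVᵀ with singular values σ_1 ≥ σ_2 ≥ … ≥ σ_r ≥ 0 (r = min(n,d)) and orthonormal left singular vectors u_1,…,u_r ∈ ℝⁿ (the columns of U). Then the Dirichlet energy of H decomposes as E_G(H) = Σ_{k=1}^r σ_k² · E_G(u_k). -/
open Matrix

/-- The Dirichlet energy `E_G(x) = Σ_{i,j} A_{ij} (x_i - x_j)^2` of a vector. -/
noncomputable def dirichletEnergy {n : ℕ} (A : Matrix (Fin n) (Fin n) ℝ)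
    (x : Fin n → ℝ) : ℝ :=
  ∑ i, ∑ j, A i j * (x i - x j) ^ 2

/-- The Dirichlet energy of a matrix `X ∈ ℝ^{n×d}` with rows `x_1,…,x_n`:
`E_G(X) = Σ_{i,j} A_{ij} ‖x_i - x_j‖²`. -/
noncomputable def dirichletEnergyM {n d : ℕ} (A : Matrix (Fin n) (Fin n) ℝ)
    (X : Matrix (Fin n) (Fin d) ℝ) : ℝ :=
  ∑ i, ∑ j, A i j * ∑ t, (X i t - X j t) ^ 2

/-- A family of vectors is orthonormal. -/
def OrthonormalFamily {r n : ℕ} (u : Fin r → Fin n → ℝ) : Prop :=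
  ∀ j k, u j ⬝ᵥ u k = if j = k then (1 : ℝ) else 0

/-! Each row difference of `H = Σ_k σ_k u_k v_kᵀ` is `h_i - h_j = Σ_k σ_k (u_k i - u_k j) v_k`, so
Pythagoras in the orthonormal right singular vectors gives
`‖h_i - h_j‖² = Σ_k σ_k² (u_k i - u_k j)²`; weighting by `A i j` and summing yields the claim. -/

theorem OrthonormalFamily.dotProduct_sum_smul_self {r d : ℕ} {v : Fin r → Fin d → ℝ}
    (hv : OrthonormalFamily v) (c : Fin r → ℝ) :
    (∑ k, c k • v k) ⬝ᵥ (∑ k, c k • v k) = ∑ k, c k ^ 2 := by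
  have hv' : ∀ j k, v j ⬝ᵥ v k = if j = k then (1 : ℝ) else 0 := hv
  simp [sum_dotProduct, dotProduct_sum, hv', sq]

theorem sum_sq_sub_rows_eq_of_eq_sum_vecMulVec {n d r : ℕ} (σ : Fin r → ℝ)
    (u : Fin r → Fin n → ℝ) {v : Fin r → Fin d → ℝ} (hv : OrthonormalFamily v)
    (i j : Fin n) :
    ∑ t, ((∑ k, σ k • vecMulVec (u k) (v k)) i t - (∑ k, σ k • vecMulVec (u k) (v k)) j t) ^ 2
      = ∑ k, σ k ^ 2 * (u k i - u k j) ^ 2 := by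
  have hrow : (∑ k, σ k • vecMulVec (u k) (v k)) i - (∑ k, σ k • vecMulVec (u k) (v k)) j
      = ∑ k, (σ k * (u k i - u k j)) • v k := by
    ext t
    simp only [Pi.sub_apply, Matrix.sum_apply, Finset.sum_apply, Matrix.smul_apply,
      Pi.smul_apply, vecMulVec_apply, smul_eq_mul, ← Finset.sum_sub_distrib]
    exact Finset.sum_congr rfl fun k _ => by ring
  have := congrArg (fun x => x ⬝ᵥ x) hrow
  simp only [hv.dotProduct_sum_smul_self, mul_pow] at this
  simpa [dotProduct, sq] using this

theorem dirichletEnergyM_eq_sum_of_sum_sq_sub_rows {n d : ℕ} {ι : Type*} [Fintype ι]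
    (A : Matrix (Fin n) (Fin n) ℝ) (X : Matrix (Fin n) (Fin d) ℝ) (w : ι → ℝ)
    (u : ι → Fin n → ℝ)
    (hX : ∀ i j, ∑ t, (X i t - X j t) ^ 2 = ∑ k, w k * (u k i - u k j) ^ 2) :
    dirichletEnergyM A X = ∑ k, w k * dirichletEnergy A (u k) := by
  simp only [dirichletEnergyM, dirichletEnergy, hX, Finset.mul_sum]
  calc ∑ i, ∑ j, ∑ k, A i j * (w k * (u k i - u k j) ^ 2)
      = ∑ i, ∑ k, ∑ j, A i j * (w k * (u k i - u k j) ^ 2) :=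
        Finset.sum_congr rfl fun i _ => Finset.sum_comm
    _ = ∑ k, ∑ i, ∑ j, A i j * (w k * (u k i - u k j) ^ 2) := Finset.sum_comm
    _ = ∑ k, ∑ i, ∑ j, w k * (A i j * (u k i - u k j) ^ 2) := by
        simp only [mul_left_comm]

theorem energyM_svd_decomposition_general (n d : ℕ)
    (A : Matrix (Fin n) (Fin n) ℝ)
    (σ : Fin (min n d) → ℝ)
    (u : Fin (min n d) → Fin n → ℝ) (v : Fin (min n d) → Fin d → ℝ)
    (hv : OrthonormalFamily v)
    (H : Matrix (Fin n) (Fin d) ℝ)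
    (hH : H = ∑ k, σ k • Matrix.vecMulVec (u k) (v k)) :
    dirichletEnergyM A H = ∑ k, σ k ^ 2 * dirichletEnergy A (u k) := by
  subst hH
  exact dirichletEnergyM_eq_sum_of_sum_sq_sub_rows A _ _ u
    (sum_sq_sub_rows_eq_of_eq_sum_vecMulVec σ u hv)

/-- If `H = U Σ Vᵀ` is a singular value decomposition of `H` with singular values
`σ_1 ≥ … ≥ σ_r ≥ 0` (`r = min(n,d)`) and orthonormal left singular vectors
`u_1,…,u_r`, then `E_G(H) = Σ_k σ_k² E_G(u_k)`. -/
theorem energyM_svd_decomposition (n d : ℕ) (hn : 1 ≤ n) (hd : 1 ≤ d)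
    (A : Matrix (Fin n) (Fin n) ℝ) (hsym : A.IsSymm)
    (hnonneg : ∀ i j, 0 ≤ A i j) (hdiag : ∀ i, A i i = 0)
    (σ : Fin (min n d) → ℝ) (hσnonneg : ∀ k, 0 ≤ σ k) (hσmono : Antitone σ)
    (u : Fin (min n d) → Fin n → ℝ) (v : Fin (min n d) → Fin d → ℝ)
    (hu : OrthonormalFamily u) (hv : OrthonormalFamily v)
    (H : Matrix (Fin n) (Fin d) ℝ)
    (hH : H = ∑ k, σ k • Matrix.vecMulVec (u k) (v k)) :
    dirichletEnergyM A H = ∑ k, σ k ^ 2 * dirichletEnergy A (u k) :=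
  energyM_svd_decomposition_general n d A σ u v hv H hH
end

section
/- (Ky Fan inequality, used as Theorem 1 of Fan 1949 in the proof of the main theorem.) Let M ∈ ℝ^{n×n} be symmetric with eigenvalues μ_1 ≤ μ_2 ≤ … ≤ μ_n (counted with multiplicity). For every m ≤ n and every orthonormal family u_1,…,u_m ∈ ℝⁿ, one has Σ_{k=1}^m u_kᵀ M u_k ≥ Σ_{k=1}^m μ_k, and equality is attained when u_1,…,u_m are orthonormal eigenvectors of M corresponding to μ_1,…,μ_m. -/
/-!
Expanding in the orthonormal eigenbasis `w`, `Σ_k u_kᵀ M u_k = Σ_j μ_j t_j` with weights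
`t_j = Σ_k (w_j ⬝ u_k)²`. Bessel's inequality gives `0 ≤ t_j ≤ 1` and Parseval's identity gives
`Σ_j t_j = m`; for monotone `μ`, such a weighted sum is smallest when the weight sits on the
first `m` indices.
-/

open Matrix

open Finset

namespace OrthonormalFamily

variable {r n : ℕ} {u : Fin r → Fin n → ℝ}

theorem orthonormal_toLp (hu : OrthonormalFamily u) :
    Orthonormal ℝ (fun k => WithLp.toLp 2 (u k)) :=
  orthonormal_iff_ite.mpr fun j k => by
    rw [EuclideanSpace.inner_toLp_toLp, star_trivial, dotProduct_comm, hu]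

theorem sum_dotProduct_sq_le (hu : OrthonormalFamily u) (v : Fin n → ℝ) :
    ∑ k, (u k ⬝ᵥ v) ^ 2 ≤ v ⬝ᵥ v := by
  have := hu.orthonormal_toLp.sum_inner_products_le (WithLp.toLp 2 v) (s := univ)
  simpa only [Real.norm_eq_abs, sq_abs, ← real_inner_self_eq_norm_sq,
    EuclideanSpace.inner_toLp_toLp, star_trivial, dotProduct_comm v] using this

theorem mul_transpose_eq_one (hu : OrthonormalFamily u) : of u * (of u)ᵀ = 1 := by
  ext j k
  simpa [mul_apply, one_apply, dotProduct] using hu j k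

variable {w : Fin n → Fin n → ℝ}

theorem sum_dotProduct_smul (hw : OrthonormalFamily w) (x : Fin n → ℝ) :
    ∑ j, (w j ⬝ᵥ x) • w j = x := by
  have h : (of w)ᵀ * of w = 1 := mul_eq_one_comm.mp hw.mul_transpose_eq_one
  calc ∑ j, (w j ⬝ᵥ x) • w j = (of w *ᵥ x) ᵥ* of w := (vecMul_eq_sum _ _).symm
    _ = x := by rw [← vecMul_transpose, vecMul_vecMul, h, vecMul_one]

theorem sum_dotProduct_sq (hw : OrthonormalFamily w) (x : Fin n → ℝ) :
    ∑ j, (w j ⬝ᵥ x) ^ 2 = x ⬝ᵥ x := by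
  calc ∑ j, (w j ⬝ᵥ x) ^ 2 = (∑ j, (w j ⬝ᵥ x) • w j) ⬝ᵥ x := by
        simp only [sum_dotProduct, smul_dotProduct, smul_eq_mul, sq]
    _ = x ⬝ᵥ x := by rw [hw.sum_dotProduct_smul]

theorem dotProduct_mulVec_self_eq_sum {M : Matrix (Fin n) (Fin n) ℝ} {μ : Fin n → ℝ}
    (hw : OrthonormalFamily w) (hMw : ∀ j, M *ᵥ w j = μ j • w j) (x : Fin n → ℝ) :
    x ⬝ᵥ M *ᵥ x = ∑ j, μ j * (w j ⬝ᵥ x) ^ 2 := by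
  rw [dotProduct_comm]
  nth_rw 1 [← hw.sum_dotProduct_smul x]
  simp only [mulVec_sum, mulVec_smul, hMw, sum_dotProduct, smul_dotProduct, smul_eq_mul]
  exact sum_congr rfl fun j _ => by ring

end OrthonormalFamily

theorem Fin.sum_castLE_eq_sum_ite {n m : ℕ} (hm : m ≤ n) (f : Fin n → ℝ) :
    ∑ k : Fin m, f (Fin.castLE hm k) = ∑ j : Fin n, if (j : ℕ) < m then f j else 0 := by
  refine Fintype.sum_of_injective (Fin.castLE hm) (Fin.castLE_injective hm) _ _ ?_ ?_
  · intro j hj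
    rw [if_neg]
    exact fun hjm => hj ⟨⟨j, hjm⟩, rfl⟩
  · intro k
    simp

theorem Monotone.sum_castLE_le_sum_mul {n m : ℕ} (hm : m ≤ n) {μ : Fin n → ℝ} (hμ : Monotone μ)
    {t : Fin n → ℝ} (ht0 : ∀ j, 0 ≤ t j) (ht1 : ∀ j, t j ≤ 1) (ht : ∑ j, t j = m) :
    ∑ k : Fin m, μ (Fin.castLE hm k) ≤ ∑ j, μ j * t j := by
  set s : Fin n → ℝ := fun j => if (j : ℕ) < m then 1 else 0 with hs_def
  have hμs : ∑ k : Fin m, μ (Fin.castLE hm k) = ∑ j, μ j * s j := by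
    simp [Fin.sum_castLE_eq_sum_ite, hs_def]
  have hs : ∑ j, s j = m := by
    simpa [hs_def] using (Fin.sum_castLE_eq_sum_ite hm (fun _ => (1 : ℝ))).symm
  obtain ⟨c, hc⟩ : ∃ c, ∀ j : Fin n, ((j : ℕ) < m → μ j ≤ c) ∧ (m ≤ j → c ≤ μ j) := by
    rcases Nat.eq_zero_or_pos n with rfl | hn
    · exact ⟨0, fun j => j.elim0⟩
    · refine ⟨μ ⟨min m (n - 1), by omega⟩, fun j => ⟨fun hj => hμ ?_, fun hj => hμ ?_⟩⟩ <;>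
        simp only [Fin.le_def] <;> omega
  have hgap : ∑ j, μ j * t j - ∑ j, μ j * s j = ∑ j, (μ j - c) * (t j - s j) := by
    have : ∑ j, c * (t j - s j) = 0 := by
      rw [← mul_sum, sum_sub_distrib, ht, hs, sub_self, mul_zero]
    simp only [sub_mul, mul_sub, sum_sub_distrib] at this ⊢
    linarith
  rw [hμs, ← sub_nonneg, hgap]
  refine sum_nonneg fun j _ => ?_
  by_cases hj : (j : ℕ) < m
  · simp only [hs_def, if_pos hj]
    exact mul_nonneg_of_nonpos_of_nonpos (by linarith [(hc j).1 hj]) (by linarith [ht1 j])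
  · simp only [hs_def, if_neg hj, sub_zero]
    exact mul_nonneg (by linarith [(hc j).2 (by omega)]) (ht0 j)

theorem ky_fan_inequality_general (n m : ℕ) (hm : m ≤ n)
    (M : Matrix (Fin n) (Fin n) ℝ)
    (μ : Fin n → ℝ) (hμmono : Monotone μ)
    (w : Fin n → Fin n → ℝ) (hw : OrthonormalFamily w)
    (hweig : ∀ j, M.mulVec (w j) = μ j • w j) :
    (∀ u : Fin m → Fin n → ℝ, OrthonormalFamily u →
      (∑ k : Fin m, μ (Fin.castLE hm k)) ≤ ∑ k : Fin m, u k ⬝ᵥ M.mulVec (u k)) ∧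
    (∀ u : Fin m → Fin n → ℝ, OrthonormalFamily u →
      (∀ k : Fin m, M.mulVec (u k) = μ (Fin.castLE hm k) • u k) →
      (∑ k : Fin m, u k ⬝ᵥ M.mulVec (u k)) = ∑ k : Fin m, μ (Fin.castLE hm k)) := by
  refine ⟨fun u hu => ?_, fun u hu hueig => ?_⟩
  · set t : Fin n → ℝ := fun j => ∑ k, (w j ⬝ᵥ u k) ^ 2
    have hquad : ∑ k, u k ⬝ᵥ M *ᵥ u k = ∑ j, μ j * t j := by
      simp only [hw.dotProduct_mulVec_self_eq_sum hweig, t, mul_sum]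
      exact sum_comm
    have ht1 : ∀ j, t j ≤ 1 := fun j => by
      simpa [t, dotProduct_comm (w j), hw j j] using hu.sum_dotProduct_sq_le (w j)
    have ht : ∑ j, t j = m := by
      simp [t, sum_comm (γ := Fin n), hw.sum_dotProduct_sq, hu _ _]
    rw [hquad]
    exact hμmono.sum_castLE_le_sum_mul hm (fun j => sum_nonneg fun k _ => sq_nonneg _) ht1 ht
  · refine sum_congr rfl fun k _ => ?_
    rw [hueig k, dotProduct_smul, hu k k, if_pos rfl, smul_eq_mul, mul_one]

/-- Ky Fan inequality: if `M` is symmetric with eigenvalues `μ_1 ≤ … ≤ μ_n`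
(listed with multiplicity, witnessed by an orthonormal eigenbasis `w`), then for any
`m ≤ n` and any orthonormal family `u_1,…,u_m`, `Σ_k u_kᵀ M u_k ≥ Σ_{k≤m} μ_k`;
equality is attained when the `u_k` are orthonormal eigenvectors of `M` for
`μ_1,…,μ_m`. -/
theorem ky_fan_inequality (n m : ℕ) (hm : m ≤ n)
    (M : Matrix (Fin n) (Fin n) ℝ) (hM : M.IsSymm)
    (μ : Fin n → ℝ) (hμmono : Monotone μ)
    (w : Fin n → Fin n → ℝ) (hw : OrthonormalFamily w)
    (hweig : ∀ j, M.mulVec (w j) = μ j • w j) :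
    (∀ u : Fin m → Fin n → ℝ, OrthonormalFamily u →
      (∑ k : Fin m, μ (Fin.castLE hm k)) ≤ ∑ k : Fin m, u k ⬝ᵥ M.mulVec (u k)) ∧
    (∀ u : Fin m → Fin n → ℝ, OrthonormalFamily u →
      (∀ k : Fin m, M.mulVec (u k) = μ (Fin.castLE hm k) • u k) →
      (∑ k : Fin m, u k ⬝ᵥ M.mulVec (u k)) = ∑ k : Fin m, μ (Fin.castLE hm k)) :=
  ky_fan_inequality_general n m hm M μ hμmono w hw hweig
end

section
/- Suppose G is connected. Let 0 = λ_1 ≤ λ_2 ≤ … ≤ λ_n be the eigenvalues of the Laplacian L with corresponding orthonormal eigenvectors v_1 = (1/√n)·1, v_2, …, v_n. Let s ≤ min(n,d) and let ε_1 > ε_2 > … > ε_s > 0. Then the minimum of E_G(X) over the set { X ∈ ℝ^{n×d} : σ_k(X) ≥ ε_k for all k ∈ {1,…,s} } equals 2·Σ_{k=1}^s ε_k²·λ_k, and it is attained by H = Σ_{k=1}^s ε_k · v_k w_kᵀ for any orthonormal vectors w_1,…,w_s ∈ ℝ^d; this H has singular values σ_k(H) = ε_k for k ∈ {1,…,s}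 and σ_k(H) = 0 for k > s. -/
open Matrix

/-- `σ : Fin (min n d) → ℝ` is the (sorted) list of singular values of `X`, witnessed
by a singular value decomposition `X = Σ_k σ_k u_k v_kᵀ` with orthonormal families
`u`, `v` and `σ_1 ≥ σ_2 ≥ … ≥ 0`. -/
def IsSingularValues {n d : ℕ} (X : Matrix (Fin n) (Fin d) ℝ)
    (σ : Fin (min n d) → ℝ) : Prop :=
  Antitone σ ∧ (∀ k, 0 ≤ σ k) ∧
    ∃ u : Fin (min n d) → Fin n → ℝ, ∃ v : Fin (min n d) → Fin d → ℝ,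
      OrthonormalFamily u ∧ OrthonormalFamily v ∧
      X = ∑ k, σ k • Matrix.vecMulVec (u k) (v k)

namespace EM
variable {n d : ℕ}

noncomputable def qf (A : Matrix (Fin n) (Fin n) ℝ) (u : Fin n → ℝ) : ℝ :=
  u ⬝ᵥ (Matrix.diagonal (fun i => ∑ t, A i t) - A).mulVec u

lemma qf_expand (A : Matrix (Fin n) (Fin n) ℝ) (u : Fin n → ℝ) :
    qf A u = (∑ i, ∑ j, A i j * u i ^ 2) - ∑ i, ∑ j, A i j * (u i * u j) := by
  unfold qf
  rw [← Finset.sum_sub_distrib]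
  simp only [dotProduct, mulVec, Matrix.sub_apply, diagonal_apply]
  apply Finset.sum_congr rfl; intro i _
  have h : (∑ j, ((if i = j then (∑ t, A i t) else 0) - A i j) * u j)
       = (∑ t, A i t) * u i - ∑ j, A i j * u j := by
    simp only [sub_mul, Finset.sum_sub_distrib, ite_mul, zero_mul]
    rw [Finset.sum_ite_eq Finset.univ i (fun j => (∑ t, A i t) * u j)]
    simp
  rw [h, mul_sub]
  congr 1
  · rw [Finset.sum_mul, Finset.mul_sum]
    apply Finset.sum_congr rfl; intro j _; ring
  · rw [Finset.mul_sum]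
    apply Finset.sum_congr rfl; intro j _; ring

lemma key1 {A : Matrix (Fin n) (Fin n) ℝ} (hsym : A.IsSymm) (a : Fin n → ℝ) :
    ∑ i, ∑ j, A i j * (a i - a j) ^ 2 = 2 * qf A a := by
  have hA : ∀ i j, A i j = A j i := fun i j => (Matrix.IsSymm.apply hsym i j).symm
  have h1 : ∑ i, ∑ j, A i j * (a j) ^ 2 = ∑ i, ∑ j, A i j * (a i) ^ 2 := by
    rw [Finset.sum_comm]
    apply Finset.sum_congr rfl; intro j _
    apply Finset.sum_congr rfl; intro i _
    rw [hA i j]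
  rw [qf_expand]
  have : ∀ i j, A i j * (a i - a j) ^ 2
      = A i j * a i ^ 2 + A i j * a j ^ 2 - 2 * (A i j * (a i * a j)) := by
    intro i j; ring
  simp only [this, Finset.sum_sub_distrib, Finset.sum_add_distrib, ← Finset.mul_sum, h1]
  ring

lemma energy_eq {A : Matrix (Fin n) (Fin n) ℝ} (hsym : A.IsSymm)
    (X : Matrix (Fin n) (Fin d) ℝ) :
    dirichletEnergyM A X = 2 * ∑ t : Fin d, qf A (fun i => X i t) := by
  unfold dirichletEnergyM
  have : ∀ i j : Fin n, A i j * ∑ t, (X i t - X j t) ^ 2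
      = ∑ t, A i j * (X i t - X j t) ^ 2 := fun i j => Finset.mul_sum ..
  simp only [this]
  have h2 : ∀ i : Fin n, ∑ j, ∑ t, A i j * (X i t - X j t) ^ 2
      = ∑ t, ∑ j, A i j * (X i t - X j t) ^ 2 := fun i => Finset.sum_comm ..
  simp only [h2]
  rw [Finset.sum_comm, Finset.mul_sum]
  apply Finset.sum_congr rfl; intro t _
  exact key1 hsym _

noncomputable def bf (A : Matrix (Fin n) (Fin n) ℝ) (z y : Fin n → ℝ) : ℝ :=
  z ⬝ᵥ (Matrix.diagonal (fun i => ∑ t, A i t) - A).mulVec y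

lemma qf_eq_bf (A : Matrix (Fin n) (Fin n) ℝ) (u : Fin n → ℝ) : qf A u = bf A u u := rfl

lemma bf_sum_left {m : ℕ} (A : Matrix (Fin n) (Fin n) ℝ) (c : Fin m → ℝ)
    (z : Fin m → Fin n → ℝ) (y : Fin n → ℝ) :
    bf A (fun i => ∑ k, c k * z k i) y = ∑ k, c k * bf A (z k) y := by
  unfold bf
  simp only [dotProduct, Finset.sum_mul, Finset.mul_sum]
  rw [Finset.sum_comm]
  apply Finset.sum_congr rfl; intro k _
  apply Finset.sum_congr rfl; intro i _
  ring

lemma bf_sum_right {m : ℕ} (A : Matrix (Fin n) (Fin n) ℝ) (e : Fin m → ℝ)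
    (z : Fin n → ℝ) (y : Fin m → Fin n → ℝ) :
    bf A z (fun j => ∑ l, e l * y l j) = ∑ l, e l * bf A z (y l) := by
  set M := Matrix.diagonal (fun i => ∑ t, A i t) - A with hM
  have h : ∀ i, M.mulVec (fun j => ∑ l, e l * y l j) i = ∑ l, e l * (M.mulVec (y l) i) := by
    intro i
    simp only [mulVec, dotProduct, Finset.mul_sum]
    rw [Finset.sum_comm]
    apply Finset.sum_congr rfl; intro l _
    apply Finset.sum_congr rfl; intro j _
    ring
  unfold bf
  rw [← hM]
  simp only [dotProduct, h, Finset.mul_sum]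
  rw [Finset.sum_comm]
  apply Finset.sum_congr rfl; intro l _
  apply Finset.sum_congr rfl; intro i _
  ring

lemma bf_expand {m : ℕ} (A : Matrix (Fin n) (Fin n) ℝ) (c e : Fin m → ℝ)
    (z y : Fin m → Fin n → ℝ) :
    bf A (fun i => ∑ k, c k * z k i) (fun j => ∑ l, e l * y l j)
      = ∑ k, ∑ l, (c k * e l) * bf A (z k) (y l) := by
  rw [bf_sum_left]
  apply Finset.sum_congr rfl; intro k _
  rw [bf_sum_right, Finset.mul_sum]
  apply Finset.sum_congr rfl; intro l _
  ring

lemma sum_qf_svd {m : ℕ} (A : Matrix (Fin n) (Fin n) ℝ) (σ : Fin m → ℝ)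
    (u : Fin m → Fin n → ℝ) (w : Fin m → Fin d → ℝ) (hw : OrthonormalFamily w) :
    ∑ t : Fin d, qf A (fun i => (∑ k, σ k • Matrix.vecMulVec (u k) (w k)) i t)
      = ∑ k, (σ k) ^ 2 * qf A (u k) := by
  have hcol : ∀ t : Fin d, (fun i => (∑ k, σ k • Matrix.vecMulVec (u k) (w k)) i t)
      = fun i => ∑ k, (σ k * w k t) * u k i := by
    intro t; ext i
    simp [Matrix.sum_apply, Matrix.vecMulVec_apply]
    apply Finset.sum_congr rfl; intro k _; ring
  calc ∑ t : Fin d, qf A (fun i => (∑ k, σ k • Matrix.vecMulVec (u k) (w k)) i t)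
      = ∑ t : Fin d, ∑ k, ∑ l, ((σ k * w k t) * (σ l * w l t)) * bf A (u k) (u l) := by
        apply Finset.sum_congr rfl; intro t _
        rw [hcol t, qf_eq_bf, bf_expand]
    _ = ∑ k, ∑ l, ∑ t : Fin d, ((σ k * w k t) * (σ l * w l t)) * bf A (u k) (u l) := by
        rw [Finset.sum_comm]
        apply Finset.sum_congr rfl; intro k _
        rw [Finset.sum_comm]
    _ = ∑ k, ∑ l, (σ k * σ l * bf A (u k) (u l)) * (w k ⬝ᵥ w l) := by
        apply Finset.sum_congr rfl; intro k _
        apply Finset.sum_congr rfl; intro l _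
        rw [dotProduct, Finset.mul_sum]
        apply Finset.sum_congr rfl; intro t _; ring
    _ = ∑ k, (σ k) ^ 2 * qf A (u k) := by
        apply Finset.sum_congr rfl; intro k _
        have hkl : ∀ l, w k ⬝ᵥ w l = if k = l then (1:ℝ) else 0 := fun l => hw k l
        simp only [hkl, mul_ite, mul_one, mul_zero]
        rw [Finset.sum_ite_eq Finset.univ k (fun l => σ k * σ l * bf A (u k) (u l))]
        simp only [Finset.mem_univ, if_pos, qf_eq_bf]
        ring

-- completeness of a full orthonormal family
lemma complete {v : Fin n → Fin n → ℝ} (hv : OrthonormalFamily v)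
    (u : Fin n → ℝ) (i : Fin n) : ∑ p, (u ⬝ᵥ v p) * v p i = u i := by
  have hVVt : (Matrix.of v) * (Matrix.of v)ᵀ = 1 := by
    ext j k
    simpa [Matrix.mul_apply, Matrix.one_apply, dotProduct] using hv j k
  have hVtV : (Matrix.of v)ᵀ * (Matrix.of v) = 1 := mul_eq_one_comm.mp hVVt
  have hcomp : ∀ j i : Fin n, ∑ p, v p j * v p i = if j = i then (1:ℝ) else 0 := by
    intro j i
    have := congrFun (congrFun hVtV j) i
    simpa [Matrix.mul_apply, Matrix.one_apply] using this
  calc ∑ p, (u ⬝ᵥ v p) * v p i = ∑ p, ∑ j, u j * (v p j * v p i) := by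
        apply Finset.sum_congr rfl; intro p _
        rw [dotProduct, Finset.sum_mul]
        apply Finset.sum_congr rfl; intro j _; ring
    _ = ∑ j, u j * ∑ p, v p j * v p i := by
        rw [Finset.sum_comm]
        apply Finset.sum_congr rfl; intro j _
        rw [Finset.mul_sum]
    _ = u i := by
        simp only [hcomp]
        simp [Finset.sum_ite_eq]

lemma parseval {v : Fin n → Fin n → ℝ} (hv : OrthonormalFamily v) (u : Fin n → ℝ) :
    ∑ p, (u ⬝ᵥ v p) ^ 2 = u ⬝ᵥ u := by
  calc ∑ p, (u ⬝ᵥ v p) ^ 2 = ∑ p, ∑ i, u i * ((u ⬝ᵥ v p) * v p i) := by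
        apply Finset.sum_congr rfl; intro p _
        rw [pow_two]
        nth_rewrite 2 [dotProduct]
        rw [Finset.mul_sum]
        apply Finset.sum_congr rfl; intro i _; ring
    _ = ∑ i, u i * ∑ p, (u ⬝ᵥ v p) * v p i := by
        rw [Finset.sum_comm]
        apply Finset.sum_congr rfl; intro i _
        rw [Finset.mul_sum]
    _ = u ⬝ᵥ u := by
        rw [dotProduct]
        apply Finset.sum_congr rfl; intro i _
        rw [complete hv u i]

lemma qf_eig {A : Matrix (Fin n) (Fin n) ℝ} {lam : Fin n → ℝ} {v : Fin n → Fin n → ℝ}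
    (hv : OrthonormalFamily v)
    (hveig : ∀ j, (Matrix.diagonal (fun i => ∑ t, A i t) - A).mulVec (v j) = lam j • v j)
    (u : Fin n → ℝ) :
    qf A u = ∑ p, lam p * (u ⬝ᵥ v p) ^ 2 := by
  set M := Matrix.diagonal (fun i => ∑ t, A i t) - A with hM
  have hmv : ∀ i, M.mulVec u i = ∑ p, (u ⬝ᵥ v p) * (lam p * v p i) := by
    intro i
    have hui : ∀ j, u j = ∑ p, (u ⬝ᵥ v p) * v p j := fun j => (complete hv u j).symm
    calc M.mulVec u i = ∑ j, M i j * u j := rfl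
      _ = ∑ j, ∑ p, (u ⬝ᵥ v p) * (M i j * v p j) := by
          apply Finset.sum_congr rfl; intro j _
          rw [hui j, Finset.mul_sum]
          apply Finset.sum_congr rfl; intro p _; ring
      _ = ∑ p, (u ⬝ᵥ v p) * ∑ j, M i j * v p j := by
          rw [Finset.sum_comm]
          apply Finset.sum_congr rfl; intro p _
          rw [Finset.mul_sum]
      _ = ∑ p, (u ⬝ᵥ v p) * (lam p * v p i) := by
          apply Finset.sum_congr rfl; intro p _
          congr 1
          have := congrFun (hveig p) i
          simpa [mulVec, dotProduct, hM] using this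
  calc qf A u = ∑ i, u i * M.mulVec u i := rfl
    _ = ∑ i, ∑ p, (u ⬝ᵥ v p) * (lam p * (u i * v p i)) := by
        apply Finset.sum_congr rfl; intro i _
        rw [hmv i, Finset.mul_sum]
        apply Finset.sum_congr rfl; intro p _; ring
    _ = ∑ p, (u ⬝ᵥ v p) * (lam p * (u ⬝ᵥ v p)) := by
        rw [Finset.sum_comm]
        apply Finset.sum_congr rfl; intro p _
        calc ∑ i, (u ⬝ᵥ v p) * (lam p * (u i * v p i))
            = (u ⬝ᵥ v p) * (lam p * ∑ i, u i * v p i) := by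
              simp only [Finset.mul_sum]
          _ = (u ⬝ᵥ v p) * (lam p * (u ⬝ᵥ v p)) := rfl
    _ = ∑ p, lam p * (u ⬝ᵥ v p) ^ 2 := by
        apply Finset.sum_congr rfl; intro p _; ring

lemma qf_eigvec {A : Matrix (Fin n) (Fin n) ℝ} {lam : Fin n → ℝ} {v : Fin n → Fin n → ℝ}
    (hv : OrthonormalFamily v)
    (hveig : ∀ j, (Matrix.diagonal (fun i => ∑ t, A i t) - A).mulVec (v j) = lam j • v j)
    (p : Fin n) : qf A (v p) = lam p := by
  unfold qf
  rw [hveig p, dotProduct_smul]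
  have := hv p p
  simp only [if_pos rfl] at this
  simp [this]

noncomputable def toE {N : ℕ} (y : Fin N → ℝ) : EuclideanSpace ℝ (Fin N) :=
  (WithLp.equiv 2 (Fin N → ℝ)).symm y

lemma onf_iff {m N : ℕ} (u : Fin m → Fin N → ℝ) :
    OrthonormalFamily u ↔ Orthonormal ℝ (fun k => toE (u k)) := by
  rw [orthonormal_iff_ite]
  have key : ∀ j k, (inner ℝ (toE (u j)) (toE (u k)) : ℝ) = u j ⬝ᵥ u k := by
    intro j k
    simp only [PiLp.inner_apply, RCLike.inner_apply, conj_trivial, toE,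
      WithLp.equiv_symm_apply, PiLp.toLp_apply, dotProduct]
    exact Finset.sum_congr rfl fun i _ => mul_comm _ _
  constructor
  · intro h j k; rw [key j k]; exact h j k
  · intro h j k; rw [← key j k]; exact h j k

lemma bessel {m N : ℕ} {u : Fin m → Fin N → ℝ} (hu : OrthonormalFamily u)
    (S : Finset (Fin m)) (y : Fin N → ℝ) (hy : y ⬝ᵥ y = 1) :
    ∑ k ∈ S, (y ⬝ᵥ u k) ^ 2 ≤ 1 := by
  have h := ((onf_iff u).mp hu).sum_inner_products_le (x := toE y) (s := S)
  have hnorm : ‖toE y‖ ^ 2 = 1 := by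
    rw [← real_inner_self_eq_norm_sq, PiLp.inner_apply]
    simpa [PiLp.inner_apply, RCLike.inner_apply, toE, WithLp.equiv_symm_apply, PiLp.toLp_apply,
      dotProduct, pow_two] using hy
  rw [hnorm] at h
  refine le_trans (le_of_eq ?_) h
  apply Finset.sum_congr rfl; intro k _
  rw [Real.norm_eq_abs, sq_abs]
  congr 1
lemma sum_castLE {M : Type*} [AddCommMonoid M] {r m : ℕ} (h : r ≤ m) (f : Fin m → M) :
    ∑ k : Fin r, f (Fin.castLE h k)
      = ∑ k ∈ Finset.univ.filter (fun k : Fin m => (k : ℕ) < r), f k := by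
  have hset : Finset.univ.filter (fun k : Fin m => (k : ℕ) < r)
      = Finset.univ.map ⟨Fin.castLE h, Fin.castLE_injective h⟩ := by
    ext k
    simp only [Finset.mem_filter, Finset.mem_univ, true_and, Finset.mem_map,
      Function.Embedding.coeFn_mk]
    constructor
    · intro hk; exact ⟨⟨(k : ℕ), hk⟩, rfl⟩
    · rintro ⟨j, -, rfl⟩; exact j.isLt
  rw [hset, Finset.sum_map]
  rfl

lemma threshold {N : ℕ} {lam : Fin N → ℝ} (hmono : Monotone lam) (r : ℕ) (hr : 0 < r)
    (hrN : r ≤ N) (c : Fin N → ℝ) (hc0 : ∀ p, 0 ≤ c p) (hc1 : ∀ p, c p ≤ 1)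
    (hsum : ∑ p, c p = ∑ p : Fin N, (if (p : ℕ) < r then (1:ℝ) else 0)) :
    ∑ p : Fin N, lam p * (if (p : ℕ) < r then (1:ℝ) else 0) ≤ ∑ p, lam p * c p := by
  have hr1 : r - 1 < N := by omega
  set t := lam ⟨r-1, hr1⟩ with ht
  set d := fun p : Fin N => (if (p : ℕ) < r then (1:ℝ) else 0) with hd
  have key : ∀ p, 0 ≤ (lam p - t) * (c p - d p) := by
    intro p
    by_cases hp : (p : ℕ) < r
    · have h1 : lam p ≤ t := hmono (show p ≤ ⟨r-1, hr1⟩ from by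
        rw [Fin.le_def]; simp; omega)
      have h2 : c p ≤ d p := by simp only [hd, if_pos hp]; exact hc1 p
      nlinarith [mul_nonneg (show (0:ℝ) ≤ t - lam p by linarith)
        (show (0:ℝ) ≤ d p - c p by linarith)]
    · have h1 : t ≤ lam p := hmono (show (⟨r-1, hr1⟩ : Fin N) ≤ p from by
        rw [Fin.le_def]; simp; omega)
      have h2 : d p ≤ c p := by
        have : d p = 0 := by simp only [hd, if_neg hp]
        rw [this]; exact hc0 p
      exact mul_nonneg (by linarith) (by linarith)
  have h0 : (0:ℝ) ≤ ∑ p, (lam p - t) * (c p - d p) := Finset.sum_nonneg fun p _ => key p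
  have hexp : ∑ p, (lam p - t) * (c p - d p)
      = ((∑ p, lam p * c p) - (∑ p, lam p * d p) - t * (∑ p, c p)) + t * (∑ p, d p) := by
    rw [Finset.mul_sum, Finset.mul_sum, ← Finset.sum_sub_distrib, ← Finset.sum_sub_distrib,
      ← Finset.sum_add_distrib]
    apply Finset.sum_congr rfl; intro p _; ring
  rw [hexp, hsum] at h0
  linarith [h0]

lemma qf_nonneg {A : Matrix (Fin n) (Fin n) ℝ} {lam : Fin n → ℝ} {v : Fin n → Fin n → ℝ}
    (hv : OrthonormalFamily v)
    (hveig : ∀ j, (Matrix.diagonal (fun i => ∑ t, A i t) - A).mulVec (v j) = lam j • v j)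
    (hlamnn : ∀ p, 0 ≤ lam p) (u : Fin n → ℝ) : 0 ≤ qf A u := by
  rw [qf_eig hv hveig]
  exact Finset.sum_nonneg fun p _ => mul_nonneg (hlamnn p) (sq_nonneg _)

lemma kyfan {N m : ℕ} {A : Matrix (Fin N) (Fin N) ℝ} {lam : Fin N → ℝ}
    {v : Fin N → Fin N → ℝ} (hv : OrthonormalFamily v)
    (hveig : ∀ j, (Matrix.diagonal (fun i => ∑ t, A i t) - A).mulVec (v j) = lam j • v j)
    (hmono : Monotone lam)
    {u : Fin m → Fin N → ℝ} (hu : OrthonormalFamily u)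
    (r : ℕ) (hr : 0 < r) (hrm : r ≤ m) (hrN : r ≤ N) :
    ∑ p : Fin r, lam (Fin.castLE hrN p) ≤ ∑ k : Fin r, qf A (u (Fin.castLE hrm k)) := by
  set S := Finset.univ.filter (fun k : Fin m => (k : ℕ) < r) with hS
  set c := fun p : Fin N => ∑ k ∈ S, (u k ⬝ᵥ v p) ^ 2 with hc
  have hc0 : ∀ p, 0 ≤ c p := fun p => Finset.sum_nonneg fun k _ => sq_nonneg _
  have hc1 : ∀ p, c p ≤ 1 := by
    intro p
    have hvp : v p ⬝ᵥ v p = 1 := by have := hv p p; simpa using this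
    have hb := bessel hu S (v p) hvp
    refine le_trans (le_of_eq ?_) hb
    apply Finset.sum_congr rfl; intro k _
    rw [dotProduct_comm]
  have hsum : ∑ p, c p = ∑ p : Fin N, (if (p : ℕ) < r then (1:ℝ) else 0) := by
    have h1 : ∑ p, c p = ∑ k ∈ S, ∑ p, (u k ⬝ᵥ v p) ^ 2 := Finset.sum_comm
    have h2 : ∀ k : Fin m, ∑ p, (u k ⬝ᵥ v p) ^ 2 = 1 := by
      intro k; rw [parseval hv]; have := hu k k; simpa using this
    have hcs : ∑ p, c p = ∑ k ∈ S, (1:ℝ) := by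
      rw [h1]; exact Finset.sum_congr rfl fun k _ => h2 k
    have hds : ∑ p : Fin N, (if (p : ℕ) < r then (1:ℝ) else 0)
        = ∑ p ∈ Finset.univ.filter (fun p : Fin N => (p : ℕ) < r), (1:ℝ) :=
      (Finset.sum_filter _ _).symm
    rw [hcs, hds, hS, ← sum_castLE hrm (fun _ => (1:ℝ)), ← sum_castLE hrN (fun _ => (1:ℝ))]
  have hq : ∑ k : Fin r, qf A (u (Fin.castLE hrm k)) = ∑ p, lam p * c p := by
    rw [sum_castLE hrm (fun k => qf A (u k)), ← hS]
    calc ∑ k ∈ S, qf A (u k) = ∑ k ∈ S, ∑ p, lam p * (u k ⬝ᵥ v p) ^ 2 :=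
          Finset.sum_congr rfl (fun k _ => qf_eig hv hveig (u k))
      _ = ∑ p, ∑ k ∈ S, lam p * (u k ⬝ᵥ v p) ^ 2 := Finset.sum_comm
      _ = ∑ p, lam p * c p := by
          apply Finset.sum_congr rfl; intro p _
          rw [hc, Finset.mul_sum]
  have hl : ∑ p : Fin r, lam (Fin.castLE hrN p)
      = ∑ p : Fin N, lam p * (if (p : ℕ) < r then (1:ℝ) else 0) := by
    rw [sum_castLE hrN (fun p => lam p), Finset.sum_filter]
    apply Finset.sum_congr rfl; intro p _
    split_ifs <;> simp
  rw [hq, hl]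
  exact threshold hmono r hr hrN c hc0 hc1 hsum

lemma abel_ineq : ∀ (s : ℕ) (e q l : ℕ → ℝ),
    (∀ j, e (j+1) ≤ e j) → (∀ j, s ≤ j → e j = 0) →
    (∀ j, j < s → ∑ k ∈ Finset.range (j+1), l k ≤ ∑ k ∈ Finset.range (j+1), q k) →
    ∑ k ∈ Finset.range s, e k * l k ≤ ∑ k ∈ Finset.range s, e k * q k := by
  intro s
  induction s with
  | zero => intro e q l _ _ _; simp
  | succ s ih =>
    intro e q l he hes hpre
    have hanti : Antitone e := antitone_nat_of_succ_le he
    have hes0 : e (s+1) = 0 := hes _ le_rfl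
    have hesnn : 0 ≤ e s := hes0 ▸ he s
    have h3 := ih (fun j => e (min j s) - e s) q l
      (fun j => by
        have hmm : e (min (j+1) s) ≤ e (min j s) := hanti (by omega)
        linarith)
      (fun j hj => by rw [min_eq_right hj]; ring)
      (fun j hj => hpre j (by omega))
    have hLl : ∑ k ∈ Finset.range s, (e (min k s) - e s) * l k
        = (∑ k ∈ Finset.range s, e k * l k) - e s * ∑ k ∈ Finset.range s, l k := by
      rw [Finset.mul_sum, ← Finset.sum_sub_distrib]
      apply Finset.sum_congr rfl; intro k hk
      rw [min_eq_left (le_of_lt (Finset.mem_range.mp hk))]; ring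
    have hLq : ∑ k ∈ Finset.range s, (e (min k s) - e s) * q k
        = (∑ k ∈ Finset.range s, e k * q k) - e s * ∑ k ∈ Finset.range s, q k := by
      rw [Finset.mul_sum, ← Finset.sum_sub_distrib]
      apply Finset.sum_congr rfl; intro k hk
      rw [min_eq_left (le_of_lt (Finset.mem_range.mp hk))]; ring
    rw [hLl, hLq] at h3
    have hp := hpre s (by omega)
    rw [Finset.sum_range_succ, Finset.sum_range_succ] at hp
    have hp2 : e s * ((∑ k ∈ Finset.range s, l k) + l s)
        ≤ e s * ((∑ k ∈ Finset.range s, q k) + q s) := mul_le_mul_of_nonneg_left hp hesnn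
    rw [mul_add, mul_add] at hp2
    rw [Finset.sum_range_succ, Finset.sum_range_succ]
    linarith

lemma main_ineq {N m s : ℕ} (hsm : s ≤ m) (hsN : s ≤ N)
    {A : Matrix (Fin N) (Fin N) ℝ} {lam : Fin N → ℝ} (hmono : Monotone lam)
    (hlamnn : ∀ p, 0 ≤ lam p)
    {v : Fin N → Fin N → ℝ} (hv : OrthonormalFamily v)
    (hveig : ∀ j, (Matrix.diagonal (fun i => ∑ t, A i t) - A).mulVec (v j) = lam j • v j)
    {u : Fin m → Fin N → ℝ} (hu : OrthonormalFamily u)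
    (σ : Fin m → ℝ) (ε : Fin s → ℝ) (hεanti : StrictAnti ε) (hεpos : ∀ k, 0 < ε k)
    (hσε : ∀ k : Fin s, ε k ≤ σ (Fin.castLE hsm k)) :
    ∑ k : Fin s, ε k ^ 2 * lam (Fin.castLE hsN k) ≤ ∑ k : Fin m, σ k ^ 2 * qf A (u k) := by
  have hqnn : ∀ k, 0 ≤ qf A (u k) := fun k => qf_nonneg hv hveig hlamnn (u k)
  have step1 : ∑ k : Fin s, ε k ^ 2 * qf A (u (Fin.castLE hsm k))
      ≤ ∑ k : Fin m, σ k ^ 2 * qf A (u k) := by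
    have hmid : ∑ k : Fin s, ε k ^ 2 * qf A (u (Fin.castLE hsm k))
        ≤ ∑ k : Fin s, σ (Fin.castLE hsm k) ^ 2 * qf A (u (Fin.castLE hsm k)) := by
      apply Finset.sum_le_sum; intro k _
      apply mul_le_mul_of_nonneg_right _ (hqnn _)
      have h1 := hσε k; have h2 := hεpos k
      nlinarith
    refine le_trans hmid ?_
    rw [sum_castLE hsm (fun k => σ k ^ 2 * qf A (u k))]
    apply Finset.sum_le_sum_of_subset_of_nonneg (Finset.filter_subset _ _)
    intro k _ _
    exact mul_nonneg (sq_nonneg _) (hqnn k)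
  refine le_trans ?_ step1
  set e : ℕ → ℝ := fun j => if h : j < s then (ε ⟨j,h⟩) ^ 2 else 0 with he
  set q : ℕ → ℝ := fun j => if h : j < m then qf A (u ⟨j,h⟩) else 0 with hqdef
  set l : ℕ → ℝ := fun j => if h : j < N then lam ⟨j,h⟩ else 0 with hldef
  have heanti : ∀ j, e (j+1) ≤ e j := by
    intro j
    by_cases h1 : j + 1 < s
    · simp only [he]
      rw [dif_pos h1, dif_pos (by omega : j < s)]
      have hlt := hεanti (show (⟨j, by omega⟩ : Fin s) < ⟨j+1, h1⟩ from by
        simp [Fin.lt_def])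
      have q1 := hεpos ⟨j+1, h1⟩
      nlinarith
    · by_cases h2 : j < s
      · simp only [he]; rw [dif_neg h1, dif_pos h2]; positivity
      · simp only [he]; rw [dif_neg h1, dif_neg h2]
  have hes : ∀ j, s ≤ j → e j = 0 := fun j hj => by
    simp only [he]; rw [dif_neg (by omega)]
  have hpre : ∀ j, j < s → ∑ k ∈ Finset.range (j+1), l k ≤ ∑ k ∈ Finset.range (j+1), q k := by
    intro j hj
    have h1 : ∑ k ∈ Finset.range (j+1), l k
        = ∑ p : Fin (j+1), lam (Fin.castLE (by omega : j+1 ≤ N) p) := by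
      rw [← Fin.sum_univ_eq_sum_range l (j+1)]
      apply Finset.sum_congr rfl; intro p _
      simp only [hldef]
      rw [dif_pos (show (p : ℕ) < N by omega)]
      rfl
    have h2 : ∑ k ∈ Finset.range (j+1), q k
        = ∑ p : Fin (j+1), qf A (u (Fin.castLE (by omega : j+1 ≤ m) p)) := by
      rw [← Fin.sum_univ_eq_sum_range q (j+1)]
      apply Finset.sum_congr rfl; intro p _
      simp only [hqdef]
      rw [dif_pos (show (p : ℕ) < m by omega)]
      rfl
    rw [h1, h2]
    exact kyfan hv hveig hmono hu (j+1) (by omega) (by omega) (by omega)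
  have habel := abel_ineq s e q l heanti hes hpre
  have hL : ∑ k : Fin s, ε k ^ 2 * lam (Fin.castLE hsN k) = ∑ k ∈ Finset.range s, e k * l k := by
    rw [← Fin.sum_univ_eq_sum_range (fun k => e k * l k) s]
    apply Finset.sum_congr rfl; intro k _
    simp only [he, hldef]
    rw [dif_pos k.isLt, dif_pos (show (k : ℕ) < N by omega)]
    rfl
  have hR : ∑ k : Fin s, ε k ^ 2 * qf A (u (Fin.castLE hsm k))
      = ∑ k ∈ Finset.range s, e k * q k := by
    rw [← Fin.sum_univ_eq_sum_range (fun k => e k * q k) s]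
    apply Finset.sum_congr rfl; intro k _
    simp only [he, hqdef]
    rw [dif_pos k.isLt, dif_pos (show (k : ℕ) < m by omega)]
    rfl
  rw [hL, hR]
  exact habel

lemma inner_toE {N : ℕ} (x y : Fin N → ℝ) : (inner ℝ (toE x) (toE y) : ℝ) = x ⬝ᵥ y := by
  simp only [PiLp.inner_apply, RCLike.inner_apply, conj_trivial, toE,
    WithLp.equiv_symm_apply, PiLp.toLp_apply, dotProduct]
  exact Finset.sum_congr rfl fun i _ => mul_comm _ _

lemma std_onf {s d : ℕ} (hsd : s ≤ d) :
    OrthonormalFamily (fun (k : Fin s) (i : Fin d) => if i = Fin.castLE hsd k then (1:ℝ) else 0) := by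
  intro j k
  simp only [dotProduct, ite_mul, one_mul, zero_mul]
  rw [Finset.sum_ite_eq' Finset.univ (Fin.castLE hsd j)
    (fun i => if i = Fin.castLE hsd k then (1:ℝ) else 0)]
  simp only [Finset.mem_univ, if_pos]
  by_cases h : j = k
  · subst h; simp
  · rw [if_neg (fun hc => h (Fin.castLE_injective hsd hc)), if_neg h]

lemma extend_onf {s m d : ℕ} (hsd : s ≤ d) (hmd : m ≤ d) (w : Fin s → Fin d → ℝ)
    (hw : OrthonormalFamily w) :
    ∃ w' : Fin m → Fin d → ℝ, OrthonormalFamily w' ∧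
      ∀ (k : Fin s) (h : (k : ℕ) < m), w' ⟨(k : ℕ), h⟩ = w k := by
  classical
  set E := EuclideanSpace ℝ (Fin d)
  set wext : Fin d → E := fun i => if h : (i : ℕ) < s then toE (w ⟨(i : ℕ), h⟩) else 0
    with hwext
  set Sset : Set (Fin d) := {i | (i : ℕ) < s} with hSset
  have hortho : Orthonormal ℝ (Sset.restrict wext) := by
    rw [orthonormal_iff_ite]
    intro i j
    have hi : ((i : Fin d) : ℕ) < s := i.2
    have hj : ((j : Fin d) : ℕ) < s := j.2
    have h1 : Sset.restrict wext i = toE (w ⟨((i : Fin d) : ℕ), hi⟩) := by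
      show wext i = _
      simp only [hwext, dif_pos hi]
    have h2 : Sset.restrict wext j = toE (w ⟨((j : Fin d) : ℕ), hj⟩) := by
      show wext j = _
      simp only [hwext, dif_pos hj]
    rw [h1, h2, inner_toE, hw]
    congr 1
    simp only [eq_iff_iff, Subtype.ext_iff, Fin.ext_iff]
  have hcard : Module.finrank ℝ E = Fintype.card (Fin d) := by
    simp [E, finrank_euclideanSpace_fin]
  obtain ⟨b, hb⟩ := hortho.exists_orthonormalBasis_extension_of_card_eq hcard
  refine ⟨fun k => b (Fin.castLE hmd k), ?_, ?_⟩
  · intro j k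
    have hO := b.orthonormal
    rw [orthonormal_iff_ite] at hO
    have := hO (Fin.castLE hmd j) (Fin.castLE hmd k)
    rw [← inner_toE]
    rw [show toE (fun i => b (Fin.castLE hmd j) i) = b (Fin.castLE hmd j) from rfl,
      show toE (fun i => b (Fin.castLE hmd k) i) = b (Fin.castLE hmd k) from rfl, this]
    by_cases h : j = k
    · subst h; simp
    · rw [if_neg (fun hc => h (Fin.castLE_injective hmd hc)), if_neg h]
  · intro k h
    have hmem : (Fin.castLE hmd ⟨(k : ℕ), h⟩) ∈ Sset := by
      simp only [hSset, Set.mem_setOf_eq]; exact k.isLt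
    have := hb _ hmem
    have h2 : wext (Fin.castLE hmd ⟨(k : ℕ), h⟩) = toE (w k) := by
      simp only [hwext, Fin.coe_castLE, Fin.val_mk]
      rw [dif_pos k.isLt]
    funext i
    have h3 := congrArg (fun x : E => x i) (this.trans h2)
    exact h3

end EM

/-- Suppose `G` is connected with Laplacian eigenvalues `0 = λ_1 ≤ λ_2 ≤ … ≤ λ_n` and
orthonormal eigenvectors `v_1 = (1/√n)·1, v_2, …, v_n`. For `s ≤ min(n,d)` and
`ε_1 > … > ε_s > 0`, the minimum of `E_G(X)` over `{X : σ_k(X) ≥ ε_k, k ∈ [s]}` equals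
`2 Σ_{k≤s} ε_k² λ_k`, attained by `H = Σ_{k≤s} ε_k v_k w_kᵀ` for any orthonormal
`w_1,…,w_s ∈ ℝ^d`, whose singular values are `ε_1,…,ε_s, 0, …, 0`. -/
theorem energyM_min_under_singular_value_constraints (n d s : ℕ)
    (hn : 1 ≤ n) (hd : 1 ≤ d) (hs : s ≤ min n d)
    (A : Matrix (Fin n) (Fin n) ℝ) (hsym : A.IsSymm)
    (hnonneg : ∀ i j, 0 ≤ A i j) (hdiag : ∀ i, A i i = 0)
    (hconn : ∀ i j : Fin n, Relation.ReflTransGen (fun a b => 0 < A a b) i j)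
    (lam : Fin n → ℝ) (hmono : Monotone lam) (hlam0 : lam ⟨0, hn⟩ = 0)
    (v : Fin n → Fin n → ℝ) (hv : OrthonormalFamily v)
    (hveig : ∀ j, (Matrix.diagonal (fun i => ∑ t, A i t) - A).mulVec (v j) = lam j • v j)
    (hv0 : v ⟨0, hn⟩ = fun _ => 1 / Real.sqrt n)
    (ε : Fin s → ℝ) (hεanti : StrictAnti ε) (hεpos : ∀ k, 0 < ε k) :
    IsLeast {e : ℝ | ∃ X : Matrix (Fin n) (Fin d) ℝ,
        (∃ σ : Fin (min n d) → ℝ, IsSingularValues X σ ∧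
          ∀ k : Fin s, ε k ≤ σ (Fin.castLE hs k)) ∧
        e = dirichletEnergyM A X}
      (2 * ∑ k : Fin s, ε k ^ 2 * lam (Fin.castLE (hs.trans (min_le_left n d)) k)) ∧
    (∀ w : Fin s → Fin d → ℝ, OrthonormalFamily w →
      (∃ σ : Fin (min n d) → ℝ,
        IsSingularValues
          (∑ k : Fin s, ε k •
            Matrix.vecMulVec (v (Fin.castLE (hs.trans (min_le_left n d)) k)) (w k)) σ ∧
        (∀ k : Fin s, σ (Fin.castLE hs k) = ε k) ∧
        (∀ k : Fin (min n d), s ≤ (k : ℕ) → σ k = 0)) ∧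
      dirichletEnergyM A
          (∑ k : Fin s, ε k •
            Matrix.vecMulVec (v (Fin.castLE (hs.trans (min_le_left n d)) k)) (w k)) =
        2 * ∑ k : Fin s, ε k ^ 2 * lam (Fin.castLE (hs.trans (min_le_left n d)) k)) := by
  have hMn : min n d ≤ n := min_le_left n d
  have hMd : min n d ≤ d := min_le_right n d
  have hsn : s ≤ n := hs.trans hMn
  have hsd : s ≤ d := hs.trans hMd
  have hlamnn : ∀ p, 0 ≤ lam p := by
    intro p
    have h0 : (⟨0, hn⟩ : Fin n) ≤ p := by rw [Fin.le_def]; exact Nat.zero_le _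
    have h1 := hmono h0
    rw [hlam0] at h1
    exact h1
  have part2 : ∀ w : Fin s → Fin d → ℝ, OrthonormalFamily w →
      (∃ σ : Fin (min n d) → ℝ,
        IsSingularValues
          (∑ k : Fin s, ε k •
            Matrix.vecMulVec (v (Fin.castLE (hs.trans (min_le_left n d)) k)) (w k)) σ ∧
        (∀ k : Fin s, σ (Fin.castLE hs k) = ε k) ∧
        (∀ k : Fin (min n d), s ≤ (k : ℕ) → σ k = 0)) ∧
      dirichletEnergyM A
          (∑ k : Fin s, ε k •
            Matrix.vecMulVec (v (Fin.castLE (hs.trans (min_le_left n d)) k)) (w k)) =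
        2 * ∑ k : Fin s, ε k ^ 2 * lam (Fin.castLE (hs.trans (min_le_left n d)) k) := by
    intro w hw
    obtain ⟨w', hw', hw'eq⟩ := EM.extend_onf hsd hMd w hw
    set σH : Fin (min n d) → ℝ := fun k => if h : (k : ℕ) < s then ε ⟨(k : ℕ), h⟩ else 0
      with hσH
    set uH : Fin (min n d) → Fin n → ℝ := fun k => v (Fin.castLE hMn k) with huH
    have hsub : ∀ (M : Type) [AddCommGroup M], ∀ f : Fin (min n d) → M,
        (∀ k : Fin (min n d), ¬ ((k : ℕ) < s) → f k = 0) →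
        ∑ k : Fin (min n d), f k = ∑ k : Fin s, f (Fin.castLE hs k) := by
      intro M _ f hf
      rw [EM.sum_castLE hs f]
      exact (Finset.sum_subset (Finset.filter_subset _ _) (fun k _ hk => by
        exact hf k (by simpa using hk))).symm
    have hcast : ∀ k : Fin s, Fin.castLE hs k = (⟨(k : ℕ), lt_of_lt_of_le k.isLt hs⟩ :
        Fin (min n d)) := fun k => Fin.ext rfl
    have hval : ∀ k : Fin s, σH (Fin.castLE hs k) = ε k := by
      intro k; simp only [hσH]
      rw [dif_pos (show ((Fin.castLE hs k : Fin (min n d)) : ℕ) < s from k.isLt)]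
      rfl
    have hzero : ∀ k : Fin (min n d), s ≤ (k : ℕ) → σH k = 0 := by
      intro k hk; simp only [hσH]; rw [dif_neg (show ¬ ((k : ℕ) < s) by omega)]
    have hdecomp : (∑ k : Fin s, ε k •
          Matrix.vecMulVec (v (Fin.castLE (hs.trans (min_le_left n d)) k)) (w k))
        = ∑ k : Fin (min n d), σH k • Matrix.vecMulVec (uH k) (w' k) := by
      rw [hsub _ _ (fun k hk => by
        simp only [hσH]; rw [dif_neg hk, zero_smul])]
      apply Finset.sum_congr rfl
      intro k _
      have h3 : w' (Fin.castLE hs k) = w k := by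
        rw [hcast k]; exact hw'eq k (lt_of_lt_of_le k.isLt hs)
      rw [hval k, h3]
      rfl
    have huHon : OrthonormalFamily uH := by
      intro j k
      have h1 : uH j ⬝ᵥ uH k = if Fin.castLE hMn j = Fin.castLE hMn k then (1:ℝ) else 0 :=
        hv _ _
      rw [h1]
      by_cases h : j = k
      · subst h; simp
      · rw [if_neg (fun hc => h (Fin.castLE_injective hMn hc)), if_neg h]
    have hσanti : Antitone σH := by
      intro j k hjk
      simp only [hσH]
      by_cases hks : (k : ℕ) < s
      · have hjs : (j : ℕ) < s := by rw [Fin.le_def] at hjk; omega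
        rw [dif_pos hks, dif_pos hjs]
        exact hεanti.antitone (show (⟨(j:ℕ), hjs⟩ : Fin s) ≤ ⟨(k:ℕ), hks⟩ from by
          rw [Fin.le_def]; rw [Fin.le_def] at hjk; exact hjk)
      · rw [dif_neg hks]
        by_cases hjs : (j : ℕ) < s
        · rw [dif_pos hjs]; exact le_of_lt (hεpos _)
        · rw [dif_neg hjs]
    have hσnn : ∀ k, 0 ≤ σH k := by
      intro k; simp only [hσH]
      by_cases hks : (k : ℕ) < s
      · rw [dif_pos hks]; exact le_of_lt (hεpos _)
      · rw [dif_neg hks]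
    have hE : dirichletEnergyM A
        (∑ k : Fin s, ε k •
          Matrix.vecMulVec (v (Fin.castLE (hs.trans (min_le_left n d)) k)) (w k))
        = 2 * ∑ k : Fin s, ε k ^ 2 * lam (Fin.castLE (hs.trans (min_le_left n d)) k) := by
      rw [hdecomp, EM.energy_eq hsym, EM.sum_qf_svd A σH uH w' hw']
      congr 1
      rw [hsub _ (fun k => σH k ^ 2 * EM.qf A (uH k)) (fun k hk => by
        simp only [hσH]; rw [dif_neg hk]; ring)]
      apply Finset.sum_congr rfl
      intro k _
      rw [hval k]
      congr 1
      exact EM.qf_eigvec hv hveig _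
    exact ⟨⟨σH, ⟨hσanti, hσnn, uH, w', huHon, hw', hdecomp⟩, hval, hzero⟩, hE⟩
  refine ⟨⟨?_, ?_⟩, part2⟩
  · obtain ⟨⟨σ, hsv, hσeq, hσzero⟩, hE⟩ := part2 _ (EM.std_onf hsd)
    exact ⟨_, ⟨σ, hsv, fun k => (hσeq k).ge⟩, hE.symm⟩
  · rintro e ⟨X, ⟨σ, ⟨hanti, hnn, u, w', hu, hw', hXdec⟩, hσε⟩, rfl⟩
    have hE : dirichletEnergyM A X = 2 * ∑ k, σ k ^ 2 * EM.qf A (u k) := by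
      rw [EM.energy_eq hsym X, hXdec, EM.sum_qf_svd A σ u w' hw']
    rw [hE]
    have hineq := EM.main_ineq hs hsn hmono hlamnn hv hveig hu σ ε hεanti hεpos hσε
    exact mul_le_mul_of_nonneg_left hineq (by norm_num)
end
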